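/- Mutual information bound for simulating PR-correlations with a RAC: in the racbox-simulation setting, suppose perfect PR-correlations hold, i.e. a ⊕ b = x ∧ y at every point of positive probability. Then the mutual information (in bits) between Alice's message bit z and everything on Bob's side satisfies I(z : (b̃, ỹ, y, s)) ≤ 1/2. -/

import Mathlib

/-!
Since `s` is independent of `(x, y, z)` and is part of Bob's view, `I(z : b̃, ỹ, y, s)` is the
average over `s` of the information that `(b̃, ỹ, y)` carries about `z` in the slice of `s`. Within
a slice, `y` is independent of `(x, z)` and `ỹ` is a function of `y`, so this is in turn the
average over `y` of `I(z : f_y(x, z))`, where `f_y` is the RAC output bit Bob receives for input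
`y`. Comparing `y = 0` with `y = 1`, perfect PR correlations force
`x = β₀(f₀(x, z)) ⊕ β₁(f₁(x, z))`. A bit `f(x, z)` that ignores `x` carries at most one bit about
`z`, but then the other bit must reveal `x` for each `z` and carries nothing about `z`; a bit that
depends on `x` for some `z` carries at most `3/2 - (3/4) log₂ 3 < 1/2`. So the two informations
add up to at most `1`, and their average is at most `1/2`.
-/

open scoped Classical

/-- A probability mass function on a finite type. -/
def IsPMF {Ω : Type*} [Fintype Ω] (P : Ω → ℝ) : Prop :=
  (∀ ω, 0 ≤ P ω) ∧ ∑ ω, P ω = 1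

/-- Probability of an event under a pmf. -/
noncomputable def Pr {Ω : Type*} [Fintype Ω] (P : Ω → ℝ) (E : Ω → Prop) : ℝ :=
  ∑ ω, if E ω then P ω else 0

/-- Shannon entropy (in bits) of a random variable `X` under pmf `P`,
with the convention `0 · log₂ 0 = 0`. -/
noncomputable def ent {Ω α : Type*} [Fintype Ω] [Fintype α]
    (P : Ω → ℝ) (X : Ω → α) : ℝ :=
  -∑ v : α, Pr P (fun ω => X ω = v) * Real.logb 2 (Pr P (fun ω => X ω = v))

/-- Conditional entropy `H(X|Y) = H(X,Y) - H(Y)`. -/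
noncomputable def condEnt {Ω α β : Type*} [Fintype Ω] [Fintype α] [Fintype β]
    (P : Ω → ℝ) (X : Ω → α) (Y : Ω → β) : ℝ :=
  ent P (fun ω => (X ω, Y ω)) - ent P Y

/-- Mutual information `I(X:Y) = H(X) + H(Y) - H(X,Y)`. -/
noncomputable def mutInf {Ω α β : Type*} [Fintype Ω] [Fintype α] [Fintype β]
    (P : Ω → ℝ) (X : Ω → α) (Y : Ω → β) : ℝ :=
  ent P X + ent P Y - ent P (fun ω => (X ω, Y ω))

/-- Conditional mutual information
`I(X:Y|Z) = H(X,Z) + H(Y,Z) - H(X,Y,Z) - H(Z)`. -/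
noncomputable def condMutInf {Ω α β γ : Type*} [Fintype Ω] [Fintype α] [Fintype β] [Fintype γ]
    (P : Ω → ℝ) (X : Ω → α) (Y : Ω → β) (Z : Ω → γ) : ℝ :=
  ent P (fun ω => (X ω, Z ω)) + ent P (fun ω => (Y ω, Z ω))
    - ent P (fun ω => (X ω, Y ω, Z ω)) - ent P Z

open Finset Real

section Law

variable {Ω α β γ : Type*} [Fintype Ω]

noncomputable def law (P : Ω → ℝ) (W : Ω → α) : α → ℝ := fun a => Pr P (fun ω => W ω = a)

lemma Pr_nonneg {P : Ω → ℝ} (hP : ∀ ω, 0 ≤ P ω) (E : Ω → Prop) : 0 ≤ Pr P E :=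
  sum_nonneg fun ω _ => by split_ifs <;> simp [hP ω]

lemma Pr_congr {P : Ω → ℝ} {E E' : Ω → Prop} (h : ∀ ω, E ω ↔ E' ω) : Pr P E = Pr P E' :=
  congrArg (Pr P) (funext fun ω => propext (h ω))

lemma exists_pos_of_Pr_pos {P : Ω → ℝ} {E : Ω → Prop} (h : 0 < Pr P E) :
    ∃ ω, 0 < P ω ∧ E ω := by
  by_contra! hne
  refine h.not_ge (sum_nonpos fun ω _ => ?_)
  split_ifs with hE
  exacts [not_lt.mp fun hP => hne ω hP hE, le_rfl]

variable [Fintype α] [Fintype β] [Fintype γ]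

lemma sum_Pr_eq_sum (P : Ω → ℝ) (X : Ω → α) : ∑ a, Pr P (fun ω => X ω = a) = ∑ ω, P ω := by
  simp only [Pr]
  rw [sum_comm]
  simp

lemma Pr_comp (P : Ω → ℝ) (W : Ω → α) (E : α → Prop) :
    Pr P (fun ω => E (W ω)) = Pr (law P W) E := by
  simp only [Pr, law]
  calc ∑ ω, (if E (W ω) then P ω else 0)
      = ∑ ω, ∑ a, if E a ∧ W ω = a then P ω else 0 := sum_congr rfl fun ω _ => by
        rw [sum_eq_single (W ω) (fun a _ h => if_neg fun h' => h h'.2.symm) (by simp)]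
        simp
    _ = ∑ a, if E a then ∑ ω, (if W ω = a then P ω else 0) else 0 := by
        rw [sum_comm]
        exact sum_congr rfl fun a _ => by split_ifs with h <;> simp [h]

lemma ent_comp (P : Ω → ℝ) (W : Ω → α) (φ : α → β) :
    ent P (fun ω => φ (W ω)) = ent (law P W) φ := by
  unfold ent
  congr 1
  exact sum_congr rfl fun b _ => by rw [Pr_comp P W (fun a => φ a = b)]

lemma mutInf_comp (P : Ω → ℝ) (W : Ω → α) (X : α → β) (Y : α → γ) :
    mutInf P (fun ω => X (W ω)) (fun ω => Y (W ω)) = mutInf (law P W) X Y := by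
  simp only [mutInf, ent_comp P W]
  rw [← ent_comp P W fun a => (X a, Y a)]

lemma ent_comp_injective (P : Ω → ℝ) (X : Ω → α) {f : α → β} (hf : Function.Injective f) :
    ent P (fun ω => f (X ω)) = ent P X := by
  unfold ent
  congr 1
  refine (Fintype.sum_of_injective f hf _ _ (fun b hb => ?_) fun a => ?_).symm
  · have : Pr P (fun ω => f (X ω) = b) = 0 := sum_eq_zero fun ω _ => if_neg fun h => hb ⟨_, h⟩
    simp [this]
  · simp only [hf.eq_iff]

lemma mutInf_comp_injective_right (P : Ω → ℝ) (X : Ω → α) (Y : Ω → β)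
    {f : β → γ} (hf : Function.Injective f) :
    mutInf P X (fun ω => f (Y ω)) = mutInf P X Y := by
  unfold mutInf
  rw [ent_comp_injective P Y hf,
    ← ent_comp_injective P (fun ω => (X ω, Y ω)) (Function.injective_id.prodMap hf)]
  rfl

end Law

lemma mul_mul_logb_mul (b x y : ℝ) :
    x * y * logb b (x * y) = y * (x * logb b x) + x * (y * logb b y) := by
  rcases eq_or_ne x 0 with rfl | hx
  · simp
  rcases eq_or_ne y 0 with rfl | hy
  · simp
  rw [logb_mul hx hy]
  ring

section Prod

variable {S T α β : Type*} [Fintype S] [Fintype T]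

lemma Pr_prod_eq_mul (μ : S → ℝ) (ν : T → ℝ) (Y : S → T → α) (s : S) (a : α) :
    Pr (fun p : S × T => μ p.1 * ν p.2) (fun p => (p.1, Y p.1 p.2) = (s, a))
      = μ s * Pr ν (fun t => Y s t = a) := by
  simp only [Pr, Fintype.sum_prod_type, Prod.mk.injEq, mul_sum]
  rw [sum_eq_single s (fun s' _ hs' => by simp [hs']) (by simp)]
  simp

lemma law_snd_prod (μ : S → ℝ) (ν : T → ℝ) (hμ : ∑ s, μ s = 1) :
    law (fun p : S × T => μ p.1 * ν p.2) Prod.snd = ν := by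
  funext t
  simp [law, Pr, Fintype.sum_prod_type, ← sum_mul, hμ]

lemma ent_prod_eq_sum [Fintype α] (μ : S → ℝ) (ν : T → ℝ) (hν : ∑ t, ν t = 1)
    (Y : S → T → α) :
    ent (fun p : S × T => μ p.1 * ν p.2) (fun p => (p.1, Y p.1 p.2))
      = -∑ s, μ s * logb 2 (μ s) + ∑ s, μ s * ent ν (Y s) := by
  have hY : ∀ s, ∑ a, Pr ν (fun t => Y s t = a) = 1 := fun s => (sum_Pr_eq_sum ν (Y s)).trans hν
  simp only [ent, Fintype.sum_prod_type, Pr_prod_eq_mul, mul_mul_logb_mul, sum_add_distrib,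
    ← sum_mul, hY, ← mul_sum, mul_neg, sum_neg_distrib]
  ring

lemma mutInf_prod_eq_sum [Fintype α] [Fintype β] (μ : S → ℝ) (ν : T → ℝ)
    (hμ : ∑ s, μ s = 1) (hν : ∑ t, ν t = 1) (Z : T → α) (Y : S → T → β) :
    mutInf (fun p : S × T => μ p.1 * ν p.2) (fun p => Z p.2) (fun p => (p.1, Y p.1 p.2))
      = ∑ s, μ s * mutInf ν Z (Y s) := by
  have hjoint := ent_comp_injective (fun p : S × T => μ p.1 * ν p.2)
    (fun p => (p.1, Z p.2, Y p.1 p.2)) (f := fun q => (q.2.1, q.1, q.2.2))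
    (fun q q' h => by simp_all [Prod.ext_iff])
  simp only [mutInf, ent_comp _ Prod.snd Z, law_snd_prod μ ν hμ]
  rw [hjoint, ent_prod_eq_sum μ ν hν, ent_prod_eq_sum μ ν hν (fun s t => (Z t, Y s t))]
  simp only [mul_add, mul_sub, sum_add_distrib, sum_sub_distrib, ← sum_mul, hμ]
  ring

lemma sum_mul_le_of_pos {μ I : S → ℝ} {c : ℝ} (hμ₀ : ∀ s, 0 ≤ μ s) (hμ : ∑ s, μ s = 1)
    (h : ∀ s, 0 < μ s → I s ≤ c) : ∑ s, μ s * I s ≤ c :=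
  calc ∑ s, μ s * I s ≤ ∑ s, μ s * c := sum_le_sum fun s _ => by
        rcases (hμ₀ s).eq_or_lt with hs | hs
        · rw [← hs, zero_mul, zero_mul]
        · exact mul_le_mul_of_nonneg_left (h s hs) hs.le
    _ = c := by rw [← sum_mul, hμ, one_mul]

end Prod

lemma logb_two_half : logb 2 (1/2 : ℝ) = -1 := by
  rw [one_div, logb_inv, logb_self_eq_one one_lt_two]

lemma logb_two_quarter : logb 2 (1/4 : ℝ) = -2 := by
  rw [show (1/4 : ℝ) = 1/2 * (1/2) by norm_num, logb_mul (by norm_num) (by norm_num),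
    logb_two_half]
  norm_num

lemma logb_two_three_quarters : logb 2 (3/4 : ℝ) = logb 2 3 - 2 := by
  rw [show (3/4 : ℝ) = 3 * (1/4) by norm_num, logb_mul (by norm_num) (by norm_num),
    logb_two_quarter]
  ring

lemma four_thirds_le_logb_two_three : (4/3 : ℝ) ≤ logb 2 3 := by
  rw [logb, le_div_iff₀ (log_pos one_lt_two)]
  have h : log ((2 : ℝ) ^ 4) ≤ log ((3 : ℝ) ^ 3) := log_le_log (by norm_num) (by norm_num)
  rw [log_pow, log_pow] at h
  push_cast at h
  linarith

noncomputable def mutInfSnd (f : Bool → Bool → Bool) : ℝ :=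
  mutInf (fun _ : Bool × Bool => (1/4 : ℝ)) (fun p => p.2) (fun p => f p.1 p.2)

lemma mutInfSnd_le_one (f : Bool → Bool → Bool) : mutInfSnd f ≤ 1 := by
  have := four_thirds_le_logb_two_three
  rcases hff : f false false <;> rcases htf : f true false <;>
    rcases hft : f false true <;> rcases htt : f true true <;>
    simp only [mutInfSnd, mutInf, ent, Pr, Fintype.sum_prod_type, Fintype.sum_bool, hff, htf,
      hft, htt] <;>
    norm_num [logb_two_half, logb_two_quarter, logb_two_three_quarters] <;> linarith

-- Under `hz`, either `f` is unbalanced and carries `3/2 - (3/4) log₂ 3` bits about `z`, or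
-- `f x z = x ⊕ d z` and carries none.
lemma mutInfSnd_le_half (f : Bool → Bool → Bool) {z : Bool} (hz : f false z ≠ f true z) :
    mutInfSnd f ≤ 1/2 := by
  have := four_thirds_le_logb_two_three
  have hz' : f true z = !f false z := Bool.eq_not_iff.mpr hz.symm
  rcases hto : f true (!z) <;> cases z <;> rcases hff : f false false <;>
    rcases hft : f false true <;> simp only [Bool.not_false, Bool.not_true] at hto <;>
    simp only [mutInfSnd, mutInf, ent, Pr, Fintype.sum_prod_type, Fintype.sum_bool, hz', hto,
      hff, hft] <;>
    norm_num [logb_two_half, logb_two_quarter, logb_two_three_quarters] <;> linarith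

lemma mutInfSnd_eq_zero (f : Bool → Bool → Bool) (h : ∀ z, f false z ≠ f true z) :
    mutInfSnd f = 0 := by
  replace h : ∀ z, f true z = !f false z := fun z => Bool.eq_not_iff.mpr (h z).symm
  rcases hff : f false false <;> rcases hft : f false true <;>
    simp only [mutInfSnd, mutInf, ent, Pr, Fintype.sum_prod_type, Fintype.sum_bool, h, hff,
      hft] <;>
    norm_num [logb_two_half, logb_two_quarter]

lemma ne_of_eq_of_xor_eq {f₀ f₁ : Bool → Bool → Bool} {β₀ β₁ : Bool → Bool}
    (h : ∀ x z, xor (β₀ (f₀ x z)) (β₁ (f₁ x z)) = x) {z : Bool} (h₀ : f₀ false z = f₀ true z) :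
    f₁ false z ≠ f₁ true z := by
  intro h₁
  have := h true z
  rw [← h₀, ← h₁, h false z] at this
  exact Bool.false_ne_true this

lemma mutInfSnd_add_le_one {f₀ f₁ : Bool → Bool → Bool} {β₀ β₁ : Bool → Bool}
    (h : ∀ x z, xor (β₀ (f₀ x z)) (β₁ (f₁ x z)) = x) : mutInfSnd f₀ + mutInfSnd f₁ ≤ 1 := by
  have h' : ∀ x z, xor (β₁ (f₁ x z)) (β₀ (f₀ x z)) = x :=
    fun x z => (Bool.xor_comm _ _).trans (h x z)
  by_cases h₀ : ∀ z, f₀ false z = f₀ true z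
  · linarith [mutInfSnd_le_one f₀, mutInfSnd_eq_zero f₁ fun z => ne_of_eq_of_xor_eq h (h₀ z)]
  by_cases h₁ : ∀ z, f₁ false z = f₁ true z
  · linarith [mutInfSnd_le_one f₁, mutInfSnd_eq_zero f₀ fun z => ne_of_eq_of_xor_eq h' (h₁ z)]
  push Not at h₀ h₁
  obtain ⟨z₀, hz₀⟩ := h₀
  obtain ⟨z₁, hz₁⟩ := h₁
  linarith [mutInfSnd_le_half f₀ hz₀, mutInfSnd_le_half f₁ hz₁]

lemma mutInf_le_half_of_xor_eq_and {γ : Type*} [Fintype γ] (f : Bool → Bool → Bool → Bool)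
    (c : Bool → γ) (α : Bool → Bool → Bool) (β : Bool → Bool → Bool)
    (h : ∀ x y z, xor (α x z) (β y (f y x z)) = (x && y)) :
    mutInf (fun _ : Bool × Bool × Bool => 1/2 * (1/4 : ℝ)) (fun t => t.2.2)
      (fun t => (f t.1 t.2.1 t.2.2, c t.1, t.1)) ≤ 1/2 := by
  have hσ : Function.Injective fun q : Bool × Bool × γ => (q.2.1, q.2.2, q.1) :=
    fun q q' hq => by simp_all [Prod.ext_iff]
  have hslice : ∀ y, mutInf (fun _ : Bool × Bool => (1/4 : ℝ)) (fun p => p.2)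
      (fun p => (f y p.1 p.2, c y)) = mutInfSnd (f y) := fun y =>
    mutInf_comp_injective_right _ _ (fun p : Bool × Bool => f y p.1 p.2)
      (f := fun b => (b, c y)) fun b b' hb => (Prod.mk.inj hb).1
  have hbox : ∀ x z, xor (β false (f false x z)) (β true (f true x z)) = x := by
    have key : ∀ a b₀ b₁ x : Bool, xor a b₀ = false → xor a b₁ = x → xor b₀ b₁ = x := by decide
    exact fun x z => key _ _ _ _ (by simpa using h x false z) (by simpa using h x true z)
  calc _ = mutInf (fun t : Bool × Bool × Bool => 1/2 * (1/4 : ℝ)) (fun t => t.2.2)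
        (fun t => (t.1, f t.1 t.2.1 t.2.2, c t.1)) :=
        mutInf_comp_injective_right _ _
          (fun t : Bool × Bool × Bool => (t.1, f t.1 t.2.1 t.2.2, c t.1)) hσ
    _ = ∑ y, 1/2 * mutInfSnd (f y) := by
        rw [mutInf_prod_eq_sum (fun _ => 1/2) (fun _ => 1/4) (by norm_num) (by norm_num)
          (fun p : Bool × Bool => p.2) fun y p => (f y p.1 p.2, c y)]
        simp only [hslice]
    _ ≤ 1/2 := by
        rw [Fintype.sum_bool]
        linarith [mutInfSnd_add_le_one hbox]

lemma law_eq_of_indep {Ω S : Type*} [Fintype Ω] [Fintype S] {P : Ω → ℝ} {x y z : Ω → Bool}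
    {s : Ω → S}
    (hindep : ∀ (vx vy vz : Bool) (vs : S),
      Pr P (fun ω => x ω = vx ∧ y ω = vy ∧ z ω = vz ∧ s ω = vs)
        = Pr P (fun ω => x ω = vx) * Pr P (fun ω => y ω = vy) *
            Pr P (fun ω => z ω = vz) * Pr P (fun ω => s ω = vs))
    (hx : ∀ v, Pr P (fun ω => x ω = v) = 1/2) (hy : ∀ v, Pr P (fun ω => y ω = v) = 1/2)
    (hz : ∀ v, Pr P (fun ω => z ω = v) = 1/2) :
    law P (fun ω => (s ω, y ω, x ω, z ω))
      = fun w => Pr P (fun ω => s ω = w.1) * (1/2 * (1/4)) := by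
  funext ⟨vs, vy, vx, vz⟩
  rw [law, Pr_congr (E' := fun ω => x ω = vx ∧ y ω = vy ∧ z ω = vz ∧ s ω = vs)
    fun ω => by simp only [Prod.mk.injEq]; tauto, hindep, hx, hy, hz]
  ring

/-- **Theorem 2 (mutual information bound).** In the racbox-simulation
setting, if perfect PR-correlations `a ⊕ b = x ∧ y` hold at every point of
positive probability, then `I(z : (b̃, ỹ, y, s)) ≤ 1/2`. -/
theorem pr_simulation_mutInf_bound
    {Ω S : Type*} [Fintype Ω] [Fintype S]
    (P : Ω → ℝ) (hP : IsPMF P)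
    (x y z : Ω → Bool) (s : Ω → S)
    (hindep : ∀ (vx vy vz : Bool) (vs : S),
      Pr P (fun ω => x ω = vx ∧ y ω = vy ∧ z ω = vz ∧ s ω = vs)
        = Pr P (fun ω => x ω = vx) * Pr P (fun ω => y ω = vy) *
            Pr P (fun ω => z ω = vz) * Pr P (fun ω => s ω = vs))
    (hx : ∀ v, Pr P (fun ω => x ω = v) = 1/2)
    (hy : ∀ v, Pr P (fun ω => y ω = v) = 1/2)
    (hz : ∀ v, Pr P (fun ω => z ω = v) = 1/2)
    (A F0 F1 : Bool × Bool × S → Bool) (G : Bool × S → Bool)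
    (B : Bool × Bool × S × Bool → Bool)
    (a yt bt b : Ω → Bool)
    (ha : ∀ ω, a ω = A (x ω, z ω, s ω))
    (hyt : ∀ ω, yt ω = G (y ω, s ω))
    (hbt : ∀ ω, bt ω = if yt ω then F1 (x ω, z ω, s ω) else F0 (x ω, z ω, s ω))
    (hb : ∀ ω, b ω = B (yt ω, bt ω, s ω, y ω))
    (hPR : ∀ ω, 0 < P ω → xor (a ω) (b ω) = (x ω && y ω)) :
    mutInf P z (fun ω => (bt ω, yt ω, y ω, s ω)) ≤ 1/2 := by
  obtain ⟨hP0, hP1⟩ := hP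
  set μ : S → ℝ := fun vs => Pr P (fun ω => s ω = vs)
  set W : Ω → S × Bool × Bool × Bool := fun ω => (s ω, y ω, x ω, z ω)
  set f : S → Bool → Bool → Bool → Bool :=
    fun vs vy vx vz => if G (vy, vs) then F1 (vx, vz, vs) else F0 (vx, vz, vs)
  set Y : S → Bool × Bool × Bool → Bool × Bool × Bool :=
    fun vs t => (f vs t.1 t.2.1 t.2.2, G (t.1, vs), t.1)
  have hlaw : law P W = fun w => μ w.1 * (1/2 * (1/4)) := law_eq_of_indep hindep hx hy hz
  have hμ1 : ∑ vs, μ vs = 1 := (sum_Pr_eq_sum P s).trans hP1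
  have hPR_law : ∀ w, 0 < law P W w → xor (A (w.2.2.1, w.2.2.2, w.1))
      (B (G (w.2.1, w.1), f w.1 w.2.1 w.2.2.1 w.2.2.2, w.1, w.2.1)) = (w.2.2.1 && w.2.1) :=
    fun w hw => by
      obtain ⟨ω, hω, rfl⟩ := exists_pos_of_Pr_pos hw
      simpa [ha, hb, hyt, hbt, f, W] using hPR ω hω
  have hσ : Function.Injective fun q : S × Bool × Bool × Bool => (q.2.1, q.2.2.1, q.2.2.2, q.1) :=
    fun q q' hq => by simp_all [Prod.ext_iff]
  calc mutInf P z (fun ω => (bt ω, yt ω, y ω, s ω))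
      = mutInf P (fun ω => (W ω).2.2.2) (fun ω => ((W ω).1, Y (W ω).1 (W ω).2)) := by
        rw [← mutInf_comp_injective_right _ _ _ hσ]
        congr
        funext ω
        simp [hbt, hyt, W, Y, f]
    _ = ∑ vs, μ vs * mutInf (fun _ => 1/2 * (1/4 : ℝ)) (fun t => t.2.2) (Y vs) := by
        rw [mutInf_comp P W (fun w => w.2.2.2) fun w => (w.1, Y w.1 w.2), hlaw,
          mutInf_prod_eq_sum μ (fun _ => 1/2 * (1/4)) hμ1 (by norm_num)
            (fun t : Bool × Bool × Bool => t.2.2) Y]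
    _ ≤ 1/2 := sum_mul_le_of_pos (fun vs => Pr_nonneg hP0 _) hμ1 fun vs hvs =>
        mutInf_le_half_of_xor_eq_and (f vs) (fun vy => G (vy, vs)) (fun vx vz => A (vx, vz, vs))
          (fun vy b => B (G (vy, vs), b, vs, vy)) fun vx vy vz =>
            hPR_law (vs, vy, vx, vz) (by rw [hlaw]; positivity)
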